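/- Let b ∈ ℝ and D⁺ := (−∞, b]. Let ℓ ∈ [0,1]ⁿ and α ∈ (0,1), and suppose that for every Borel probability measure ν supported on D⁺ with CDF F, taking X i.i.d. of size n from ν, P( F(t) ≥ G_{X,ℓ}(t) for all t ∈ ℝ ) ≥ 1 − α (i.e., G_{X,ℓ} is a (1−α) lower confidence bound for the CDF on D⁺). Then for every x ∈ (D⁺)ⁿ, using the ordering function T(y) := m_{D⁺}(y,ℓ), the resulting upper confidence bound satisfies b^α_{D⁺,T}(x) ≤ m_{D⁺}(x,ℓ). -/

import Mathlib

open MeasureTheory Set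

/-- The sorted rearrangement (order statistics) of a finite real vector:
`sortedVec x i` is the (i+1)-st order statistic `x_{(i+1)}` (0-indexed). -/
noncomputable def sortedVec {n : ℕ} (x : Fin n → ℝ) : Fin n → ℝ :=
  x ∘ ⇑(Tuple.sort x)

/-- The induced mean `m(x, ℓ) = s - ∑ ℓ_{(i)} (x_{(i+1)} - x_{(i)})`, with `x_{(n+1)} := s`. -/
noncomputable def inducedMean {n : ℕ} (s : ℝ) (x ℓ : Fin n → ℝ) : ℝ :=
  s - ∑ i : Fin n, sortedVec ℓ i * ((Fin.snoc (sortedVec x) s : Fin (n+1) → ℝ) i.succ - sortedVec x i)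

/-- `S_{D,T}(x) = {y ∈ Dⁿ : T y ≤ T x}`. -/
def SsetD {n : ℕ} (D : Set ℝ) (T : (Fin n → ℝ) → ℝ) (x : Fin n → ℝ) : Set (Fin n → ℝ) :=
  {y | (∀ i, y i ∈ D) ∧ T y ≤ T x}

/-- `b_{D,T}(x, u) = sup_{z ∈ S_{D,T}(x)} m_{sup D}(z, u)`. -/
noncomputable def bfun {n : ℕ} (D : Set ℝ) (T : (Fin n → ℝ) → ℝ) (x u : Fin n → ℝ) : ℝ :=
  sSup ((fun z => inducedMean (sSup D) z u) '' SsetD D T x)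

/-- The uniform probability measure on `[0,1]`. -/
noncomputable def unif01 : Measure ℝ := volume.restrict (Icc (0:ℝ) 1)

/-- The law of an i.i.d. sample of size `n` from Uniform(0,1). -/
noncomputable def unifPi (n : ℕ) : Measure (Fin n → ℝ) := Measure.pi fun _ => unif01

/-- The `p`-quantile of the random variable `Y` under `μ`:
`Q(p, Y) = inf {y : P(Y ≤ y) ≥ p}`. -/
noncomputable def rquantile {Ω : Type*} [MeasurableSpace Ω] (μ : Measure Ω)
    (Y : Ω → ℝ) (p : ℝ) : ℝ :=
  sInf {y : ℝ | ENNReal.ofReal p ≤ μ {ω | Y ω ≤ y}}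

/-- The upper confidence bound `b^α_{D,T}(x) = Q(1 - α, b_{D,T}(x, U))`, `U` i.i.d. Uniform(0,1). -/
noncomputable def ucb {n : ℕ} (D : Set ℝ) (T : (Fin n → ℝ) → ℝ) (α : ℝ)
    (x : Fin n → ℝ) : ℝ :=
  rquantile (unifPi n) (bfun D T x) (1 - α)

/-- The stairstep function `G_{x,ℓ}` with top value at `s`. -/
noncomputable def stairstep {n : ℕ} (s : ℝ) (x ℓ : Fin n → ℝ) (t : ℝ) : ℝ :=
  if s ≤ t then 1 else sSup ({0} ∪ (sortedVec ℓ '' {i | sortedVec x i ≤ t}))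

/-- The `k`-th smallest value (1-indexed) among `m 0, …, m (L-1)`. -/
noncomputable def kthSmallest {L : ℕ} (m : Fin L → ℝ) (k : ℕ) : ℝ :=
  sInf {y : ℝ | k ≤ Nat.card {j : Fin L // m j ≤ y}}

/-!
Test the hypothesis on the uniform law `ν` on `[b - 1, b]`, whose CDF at `a + (b - 1)` is `a` for
`a ∈ [0, 1]`. A sample from `ν` is `U + (b - 1)` with `U` uniform on `[0, 1]ⁿ`, and evaluating the
band `G ≤ F` at the sample's own order statistics gives `ℓ_{(i)} ≤ U_{(i)}` for all `i`, with
probability at least `1 - α`. As `m_b(z, u)` is antitone in the order statistics of the weights `u`,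
on that event every `z` with `m_b(z, ℓ) ≤ m_b(x, ℓ)` satisfies `m_b(z, U) ≤ m_b(x, ℓ)`, i.e.
`b_{D⁺,T}(x, U) ≤ m_b(x, ℓ)`, and this bounds the `(1 - α)`-quantile.
-/

open Filter

section InducedMean

variable {n : ℕ}

lemma sortedVec_add_const (x : Fin n → ℝ) (c : ℝ) :
    sortedVec (fun i => x i + c) = fun i => sortedVec x i + c := by
  have h : (fun i => x i + c) ∘ ⇑(Tuple.sort x)
      = (fun i => x i + c) ∘ ⇑(Tuple.sort (fun i => x i + c)) :=
    Tuple.comp_sort_eq_comp_iff_monotone.mpr fun _ _ hij =>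
      add_le_add_left (Tuple.monotone_sort x hij) c
  funext i
  exact (congrFun h i).symm

lemma sortedVec_le_snoc_succ {s : ℝ} {z : Fin n → ℝ} (hz : ∀ i, z i ≤ s) (i : Fin n) :
    sortedVec z i ≤ (Fin.snoc (sortedVec z) s : Fin (n + 1) → ℝ) i.succ := by
  rcases lt_or_ge ((i : ℕ) + 1) n with h | h
  · have he : (i.succ : Fin (n + 1)) = Fin.castSucc ⟨(i : ℕ) + 1, h⟩ := by ext; simp
    rw [he, Fin.snoc_castSucc]
    exact Tuple.monotone_sort z (by simp [Fin.le_def])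
  · have he : (i.succ : Fin (n + 1)) = Fin.last n := by ext; simp; omega
    rw [he, Fin.snoc_last]
    exact hz _

lemma inducedMean_le_inducedMean {s : ℝ} {z v w : Fin n → ℝ} (hz : ∀ i, z i ≤ s)
    (hvw : ∀ i, sortedVec v i ≤ sortedVec w i) : inducedMean s z w ≤ inducedMean s z v :=
  sub_le_sub_left (Finset.sum_le_sum fun i _ =>
    mul_le_mul_of_nonneg_right (hvw i) (sub_nonneg.2 (sortedVec_le_snoc_succ hz i))) s

lemma inducedMean_le {s : ℝ} {z u : Fin n → ℝ} (hz : ∀ i, z i ≤ s) (hu : ∀ i, 0 ≤ u i) :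
    inducedMean s z u ≤ s :=
  sub_le_self s (Finset.sum_nonneg fun i _ =>
    mul_nonneg (hu _) (sub_nonneg.2 (sortedVec_le_snoc_succ hz i)))

lemma sortedVec_le_stairstep {s : ℝ} {y ℓ : Fin n → ℝ} {i : Fin n} (hy : sortedVec y i < s) :
    sortedVec ℓ i ≤ stairstep s y ℓ (sortedVec y i) := by
  rw [stairstep, if_neg hy.not_ge]
  exact le_csSup ((finite_singleton 0).union ((toFinite _).image _)).bddAbove
    (Or.inr ⟨i, le_refl (sortedVec y i), rfl⟩)

lemma sortedVec_le_of_stairstep_le {b : ℝ} {ℓ u : Fin n → ℝ} {F : ℝ → ℝ} (hℓ : ∀ i, ℓ i ≤ 1)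
    (hu : ∀ i, u i ∈ Icc (0 : ℝ) 1) (hF : ∀ a ∈ Icc (0 : ℝ) 1, F (a + (b - 1)) = a)
    (hband : ∀ t, stairstep b (fun i => u i + (b - 1)) ℓ t ≤ F t) (i : Fin n) :
    sortedVec ℓ i ≤ sortedVec u i := by
  have hui : sortedVec u i ∈ Icc (0 : ℝ) 1 := hu _
  rcases hui.2.lt_or_eq with hlt | heq
  · calc sortedVec ℓ i
        ≤ stairstep b (fun i => u i + (b - 1)) ℓ (sortedVec (fun i => u i + (b - 1)) i) :=
          sortedVec_le_stairstep (by rw [sortedVec_add_const]; linarith)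
      _ ≤ F (sortedVec u i + (b - 1)) := by rw [sortedVec_add_const]; exact hband _
      _ = sortedVec u i := hF _ hui
  · exact heq ▸ hℓ _

end InducedMean

section Bfun

variable {n : ℕ} {b : ℝ} {x u : Fin n → ℝ}

lemma bfun_Iic_le {ℓ : Fin n → ℝ} (hx : ∀ i, x i ≤ b)
    (hℓu : ∀ i, sortedVec ℓ i ≤ sortedVec u i) :
    bfun (Iic b) (fun y => inducedMean b y ℓ) x u ≤ inducedMean b x ℓ := by
  rw [bfun, csSup_Iic]
  refine csSup_le ⟨_, x, ⟨hx, le_rfl⟩, rfl⟩ ?_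
  rintro _ ⟨z, ⟨hz, hzx⟩, rfl⟩
  exact (inducedMean_le_inducedMean hz hℓu).trans hzx

lemma inducedMean_one_le_bfun_Iic {T : (Fin n → ℝ) → ℝ} (hx : ∀ i, x i ≤ b)
    (hu : ∀ i, u i ∈ Icc (0 : ℝ) 1) :
    inducedMean b x (fun _ => 1) ≤ bfun (Iic b) T x u := by
  rw [bfun, csSup_Iic]
  refine (inducedMean_le_inducedMean (v := u) (w := fun _ => 1) hx fun i => (hu _).2).trans
    (le_csSup ⟨b, ?_⟩ ⟨x, ⟨hx, le_rfl⟩, rfl⟩)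
  rintro _ ⟨z, ⟨hz, -⟩, rfl⟩
  exact inducedMean_le hz fun i => (hu i).1

end Bfun

lemma rquantile_le {Ω : Type*} [MeasurableSpace Ω] {μ : Measure Ω} {Y : Ω → ℝ} {p m y : ℝ}
    (hp : 0 < p) (hm : ∀ᵐ ω ∂μ, m ≤ Y ω) (hy : ENNReal.ofReal p ≤ μ {ω | Y ω ≤ y}) :
    rquantile μ Y p ≤ y := by
  refine csInf_le ⟨m, fun z hz => ?_⟩ hy
  by_contra! hzm
  have hnull : μ {ω | Y ω ≤ z} = 0 :=
    measure_mono_null (fun ω hω => (hω.trans_lt hzm).not_ge) (ae_iff.1 hm)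
  exact (ENNReal.ofReal_pos.2 hp).not_ge (hnull ▸ hz)

section Uniform

instance : IsProbabilityMeasure unif01 :=
  ⟨by simp [unif01]⟩

lemma ae_unifPi_mem_Icc (n : ℕ) : ∀ᵐ u ∂unifPi n, ∀ i, u i ∈ Icc (0 : ℝ) 1 :=
  eventually_all.2 fun _ =>
    Measure.tendsto_eval_ae_ae.eventually (ae_restrict_mem measurableSet_Icc)

lemma unif01_map_add_const_Iic (c : ℝ) {a : ℝ} (ha : a ∈ Icc (0 : ℝ) 1) :
    (unif01.map (· + c) (Iic (a + c))).toReal = a := by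
  rw [Measure.map_apply (measurable_add_const c) measurableSet_Iic]
  have hpre : (· + c) ⁻¹' Iic (a + c) = Iic a := by ext; simp
  have hcut : Iic a ∩ Icc 0 1 = Icc 0 a := by
    ext t
    simp only [mem_inter_iff, mem_Iic, mem_Icc]
    constructor
    · exact fun h => ⟨h.2.1, h.1⟩
    · exact fun h => ⟨h.2, h.1, h.2.trans ha.2⟩
  rw [hpre, unif01, Measure.restrict_apply measurableSet_Iic, hcut, Real.volume_Icc]
  simp [ha.1]

lemma ae_unif01_map_add_const_le (c : ℝ) : ∀ᵐ t ∂unif01.map (· + c), t ≤ 1 + c := by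
  rw [ae_map_iff (measurable_add_const c).aemeasurable measurableSet_Iic]
  filter_upwards [ae_restrict_mem measurableSet_Icc] with t ht
  linarith [ht.2]

end Uniform

/-- if `G_{X,ℓ}` is a `(1-α)` lower confidence bound for the CDF of
every distribution supported on `D⁺ = (-∞, b]`, then, with ordering function
`T(y) = m_{D⁺}(y, ℓ)`, the UCB satisfies `b^α_{D⁺,T}(x) ≤ m_{D⁺}(x, ℓ)`. -/
theorem stmt10 {n : ℕ} (b : ℝ) (ℓ : Fin n → ℝ) (hℓ : ∀ i, ℓ i ∈ Set.Icc (0:ℝ) 1)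
    (α : ℝ) (hα : α ∈ Set.Ioo (0:ℝ) 1)
    (hlcb : ∀ (ν : Measure ℝ) [IsProbabilityMeasure ν], (∀ᵐ t ∂ν, t ≤ b) →
      ENNReal.ofReal (1 - α)
        ≤ (Measure.pi fun _ : Fin n => ν)
            {x | ∀ t : ℝ, stairstep b x ℓ t ≤ (ν (Set.Iic t)).toReal}) :
    ∀ x : Fin n → ℝ, (∀ i, x i ≤ b) →
      ucb (Set.Iic b) (fun y => inducedMean b y ℓ) α x ≤ inducedMean b x ℓ := by
  intro x hx
  set ν := unif01.map (· + (b - 1))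
  have : IsProbabilityMeasure ν :=
    Measure.isProbabilityMeasure_map (measurable_add_const _).aemeasurable
  have hband := hlcb ν (by simpa using ae_unif01_map_add_const_le (b - 1))
  have hshift : MeasurePreserving (MeasurableEquiv.addRight fun _ : Fin n => b - 1)
      (unifPi n) (Measure.pi fun _ => ν) :=
    measurePreserving_pi _ _ fun _ => ⟨measurable_add_const _, rfl⟩
  rw [← hshift.measure_preimage_equiv] at hband
  refine rquantile_le (sub_pos.2 hα.2)
    ((ae_unifPi_mem_Icc n).mono fun u hu => inducedMean_one_le_bfun_Iic hx hu)
    (hband.trans (measure_mono_ae ?_))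
  filter_upwards [ae_unifPi_mem_Icc n] with u hu hband_u
  exact bfun_Iic_le hx (sortedVec_le_of_stairstep_le (fun i => (hℓ i).2) hu
    (fun a ha => unif01_map_add_const_Iic _ ha) hband_u)
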